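/- arXiv:1508.00355 — 4 statements merged into one kernel-verified Lean document; each statement's English description precedes it below -/
import Mathlib

section
/- Suppose positive reals r, H and reals N ≠ 0, νΦ satisfy the photon sphere constraint 4/3 = r^2 H^2 + (4/3)(r νΦ / N)^2, and define the charge q := -νΦ r^2 / N and mass μ := r/3 + 2q^2/(3r). Then μ > 0 and μ^2 - q^2 = (r^2 - q^2)(r^2 - 4q^2)/(9 r^2). -/
/-- Mass and charge of a photon sphere component: μ > 0 and
μ² - q² = (r² - q²)(r² - 4q²)/(9r²). -/
theorem neck_mass_charge (r H N νΦ : ℝ) (hr : 0 < r) (hH : 0 < H) (hN : N ≠ 0)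
    (hconstraint : (4 : ℝ) / 3 = r ^ 2 * H ^ 2 + (4 / 3) * (r * νΦ / N) ^ 2)
    (q μ : ℝ) (hq : q = -νΦ * r ^ 2 / N) (hμ : μ = r / 3 + 2 * q ^ 2 / (3 * r)) :
    0 < μ ∧ μ ^ 2 - q ^ 2 = (r ^ 2 - q ^ 2) * (r ^ 2 - 4 * q ^ 2) / (9 * r ^ 2) := by
  constructor
  · have : 0 ≤ 2 * q ^ 2 / (3 * r) := by positivity
    rw [hμ]; linarith [hr]
  · rw [hμ]; field_simp; ring
end

section
/- Suppose positive reals r, H and reals N > 0, νΦ satisfy 4/3 = r^2 H^2 + (4/3)(q/r)^2 where q := -νΦ r^2 / N, and set μ := r/3 + 2q^2/(3r). If rH > 1 (sub-extremality of the photon sphere), then r^2 > 4 q^2 and consequently μ^2 > q^2, i.e., the glued Reissner-Nordström neck of mass μ and charge q is sub-extremal. -/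
/-- Sub-extremality of the photon sphere, rH > 1, implies r² > 4q² and hence
sub-extremality μ² > q² of the glued Reissner–Nordström neck. -/
theorem neck_subextremal (r H N νΦ : ℝ) (hr : 0 < r) (hH : 0 < H) (hN : 0 < N)
    (q μ : ℝ) (hq : q = -νΦ * r ^ 2 / N)
    (hconstraint : (4 : ℝ) / 3 = r ^ 2 * H ^ 2 + (4 / 3) * (q / r) ^ 2)
    (hμ : μ = r / 3 + 2 * q ^ 2 / (3 * r))
    (hsub : 1 < r * H) :
    r ^ 2 > 4 * q ^ 2 ∧ μ ^ 2 > q ^ 2 := by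
  have hr2 : (0:ℝ) < r ^ 2 := by positivity
  have hc : 4 / 3 * r ^ 2 = r ^ 2 * H ^ 2 * r ^ 2 + 4 / 3 * q ^ 2 := by
    field_simp at hconstraint ⊢
    nlinarith [hconstraint]
  have h1 : r ^ 2 > 4 * q ^ 2 := by nlinarith [sq_nonneg (r * H - 1), hr.le]
  refine ⟨h1, ?_⟩
  have hμ' : μ * (3 * r) = r ^ 2 + 2 * q ^ 2 := by
    rw [hμ]; field_simp
  have hq2 : 0 ≤ q ^ 2 := sq_nonneg q
  nlinarith [sq_nonneg (r ^ 2 - q ^ 2), mul_pos hr2 (by nlinarith : (0:ℝ) < r ^ 2 - 4 * q ^ 2), sq_nonneg μ]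
end

section
/- Suppose constants N_0 > 0 (lapse value), H > 0 (mean curvature), r > 0 (area radius), M, Q, m ∈ ℝ with Q ≠ 0 satisfy: the functional relationship N_0^2 = 1 + Φ_0^2 - 2(M/Q)Φ_0 with Φ_0 = (M - m)/Q, the Komar relation m = r^2 ν(N) with 2ν(N) = N_0 H, and the constraint 4/3 = r^2 H^2 + (4/3)(q/r)^2 with m ≠ 0 where q is the charge satisfying N_0^2 = (Q^2 + m^2 - M^2)/Q^2. Then 1/(H^2 r^2) = 1 + (Q^2 - M^2)/(4 m^2). -/
/-- The identity 1/(H²r²) = 1 + (Q² - M²)/(4m²) for a connected photon sphere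
boundary in an electrostatic electro-vacuum system. -/
theorem photon_sphere_extremality_identity (N₀ H r M Q m νN Φ₀ : ℝ)
    (hN₀ : 0 < N₀) (hH : 0 < H) (hr : 0 < r) (hQ : Q ≠ 0) (hm : m ≠ 0)
    (hΦ₀ : Φ₀ = (M - m) / Q)
    (hfunc : N₀ ^ 2 = 1 + Φ₀ ^ 2 - 2 * (M / Q) * Φ₀)
    (hKomar : m = r ^ 2 * νN)
    (hprop : N₀ * H = 2 * νN)
    (hconstraint : (4 : ℝ) / 3 = r ^ 2 * H ^ 2 + (4 / 3) * (Q ^ 2 / r ^ 2)) :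
    1 / (H ^ 2 * r ^ 2) = 1 + (Q ^ 2 - M ^ 2) / (4 * m ^ 2) := by
  subst hΦ₀
  have hQQ : Q * Q ≠ 0 := mul_ne_zero hQ hQ
  have h1 : N₀ ^ 2 * Q ^ 2 = Q ^ 2 + m ^ 2 - M ^ 2 := by
    field_simp at hfunc
    have hz : (N₀ ^ 2 * Q ^ 2 - (Q ^ 2 + m ^ 2 - M ^ 2)) * (Q * Q) = 0 := by
      linear_combination (Q * Q) * hfunc
    have := (mul_eq_zero.mp hz).resolve_right hQQ
    linarith
  have h2 : N₀ * r ^ 2 * H = 2 * m := by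
    rw [hKomar]; ring_nf; nlinarith [hprop]
  have h2sq : N₀ ^ 2 * r ^ 4 * H ^ 2 = 4 * m ^ 2 := by
    linear_combination (N₀ * r ^ 2 * H + 2 * m) * h2
  have h3 : Q ^ 2 = r ^ 2 - (3 / 4) * r ^ 4 * H ^ 2 := by
    field_simp at hconstraint
    nlinarith [hconstraint]
  have hH2 : H ^ 2 * r ^ 2 ≠ 0 := by positivity
  have hm2 : (4 : ℝ) * m ^ 2 ≠ 0 := by positivity
  field_simp
  linear_combination (H ^ 2 * r ^ 2) * h1 + ((3 / 4) * H ^ 2 * r ^ 2 - 1) * h2sq +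
    (-(N₀ ^ 2 * H ^ 2 * r ^ 2)) * h3
end

section
/- The photon sphere of Reissner-Nordström is sub-extremal iff the spacetime is sub-extremal: for M > 0, Q^2 < M^2, and r_+ = (3M/2)+(1/2)√(9M^2-8Q^2), the mean curvature H(r_+) = 2N(r_+)/r_+ satisfies H(r_+)·r_+ > 1, where N(ρ)=√(1-2M/ρ+Q^2/ρ^2). -/
/-- The photon sphere of sub-extremal Reissner–Nordström is sub-extremal:
H(r₊)·r₊ > 1 with H(r₊) = 2N(r₊)/r₊. -/
theorem RN_photon_sphere_subextremal (M Q : ℝ) (hM : 0 < M)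
    (hsub : Q ^ 2 < M ^ 2)
    (N : ℝ → ℝ) (hN : N = fun ρ => Real.sqrt (1 - 2 * M / ρ + Q ^ 2 / ρ ^ 2))
    (rp : ℝ) (hrp : rp = 3 * M / 2 + Real.sqrt (9 * M ^ 2 - 8 * Q ^ 2) / 2) :
    (2 * N rp / rp) * rp > 1 := by
  subst hN
  set s := Real.sqrt (9 * M ^ 2 - 8 * Q ^ 2) with hs
  have hs2 : s ^ 2 = 9 * M ^ 2 - 8 * Q ^ 2 := Real.sq_sqrt (by nlinarith)
  have hsnn : 0 ≤ s := Real.sqrt_nonneg _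
  have hsM : M < s := by nlinarith
  have hrpos : 0 < rp := by rw [hrp]; nlinarith
  have hid : rp ^ 2 = 3 * M * rp - 2 * Q ^ 2 := by
    rw [hrp]; linear_combination (1/4) * hs2
  have hexpr : 1 - 2 * M / rp + Q ^ 2 / rp ^ 2
      = (rp ^ 2 - 2 * M * rp + Q ^ 2) / rp ^ 2 := by
    field_simp
  have hkey : (1/4 : ℝ) < (rp ^ 2 - 2 * M * rp + Q ^ 2) / rp ^ 2 := by
    rw [lt_div_iff₀ (by positivity)]
    nlinarith
  have hN1 : (1/2 : ℝ) < Real.sqrt (1 - 2 * M / rp + Q ^ 2 / rp ^ 2) := by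
    rw [hexpr]
    have h := Real.sqrt_lt_sqrt (by norm_num : (0:ℝ) ≤ 1/4) hkey
    rwa [show (1/4 : ℝ) = (1/2)^2 by norm_num, Real.sqrt_sq (by norm_num)] at h
  have : (2 * Real.sqrt (1 - 2 * M / rp + Q ^ 2 / rp ^ 2) / rp) * rp
      = 2 * Real.sqrt (1 - 2 * M / rp + Q ^ 2 / rp ^ 2) :=
    div_mul_cancel₀ _ hrpos.ne'
  simp only [this]
  linarith
end
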